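/- Let X be a type and let H be a nonempty set of binary hypotheses h : X → Bool that is symmetric, i.e. for every h ∈ H the pointwise complement (fun x => ¬ h x) also belongs to H. Let xs : Fin Ns → X and xt : Fin Nt → X be finite samples with Ns > 0 and Nt > 0, and define P_s(h) = (1/Ns) · #{i : h (xs i) = false} and P_t(h) = (1/Nt) · #{j : h (xt j) = false}. Then the empirical H-divergence satisfies 2 · sSup { |P_s(h) - P_t(h)| : h ∈ H } = 2 · (1 - sInf { (1/Ns) · #{i : h (xs i) = true} + (1/Nt) · #{j : h (xt j) = false} : h ∈ H }). -/
import Mathlib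


open Finset

/-- Empirical H-divergence identity for a symmetric hypothesis class:
`2 sup_h |P_s(h) - P_t(h)| = 2 (1 - inf_h [ (1/Ns) #{h(xs i)=1} + (1/Nt) #{h(xt j)=0} ])`. -/
theorem empirical_H_divergence_identity {X : Type*}
    (H : Set (X → Bool)) (hne : H.Nonempty)
    (hsym : ∀ h ∈ H, (fun x => !(h x)) ∈ H)
    (Ns Nt : ℕ) (hNs : 0 < Ns) (hNt : 0 < Nt)
    (xs : Fin Ns → X) (xt : Fin Nt → X)
    (Ps Pt : (X → Bool) → ℝ)
    (hPs : Ps = fun h => (1 / (Ns : ℝ)) *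
      ((Finset.univ.filter (fun i => h (xs i) = false)).card : ℝ))
    (hPt : Pt = fun h => (1 / (Nt : ℝ)) *
      ((Finset.univ.filter (fun j => h (xt j) = false)).card : ℝ)) :
    2 * sSup {v : ℝ | ∃ h ∈ H, v = |Ps h - Pt h|}
      = 2 * (1 - sInf {v : ℝ | ∃ h ∈ H, v =
          (1 / (Ns : ℝ)) * ((Finset.univ.filter (fun i => h (xs i) = true)).card : ℝ)
            + (1 / (Nt : ℝ)) * ((Finset.univ.filter (fun j => h (xt j) = false)).card : ℝ)}) := by
  obtain ⟨h₀, hh₀⟩ := hne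
  have hNs' : (0:ℝ) < Ns := by exact_mod_cast hNs
  have hNt' : (0:ℝ) < Nt := by exact_mod_cast hNt
  -- the "true" count is complementary to Ps
  have keyS : ∀ h : X → Bool,
      (1 / (Ns : ℝ)) * ((univ.filter (fun i => h (xs i) = true)).card : ℝ) = 1 - Ps h := by
    intro h
    have hcard : (univ.filter (fun i => h (xs i) = true)).card
        + (univ.filter (fun i => h (xs i) = false)).card = Ns := by
      have := Finset.card_filter_add_card_filter_not
        (s := (univ : Finset (Fin Ns))) (p := fun i => h (xs i) = true)
      simpa [Bool.not_eq_true] using this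
    have hcastc : ((univ.filter (fun i => h (xs i) = true)).card : ℝ)
        = (Ns : ℝ) - ((univ.filter (fun i => h (xs i) = false)).card : ℝ) := by
      have := congrArg (Nat.cast : ℕ → ℝ) hcard
      push_cast at this; linarith
    rw [hPs, hcastc]; field_simp
  -- complement formulas
  have compS : ∀ h : X → Bool, Ps (fun x => !(h x)) = 1 - Ps h := by
    intro h
    rw [← keyS h, hPs]
    simp
  have compT : ∀ h : X → Bool, Pt (fun x => !(h x)) = 1 - Pt h := by
    intro h
    have hcard : (univ.filter (fun j => h (xt j) = true)).card
        + (univ.filter (fun j => h (xt j) = false)).card = Nt := by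
      have := Finset.card_filter_add_card_filter_not
        (s := (univ : Finset (Fin Nt))) (p := fun j => h (xt j) = true)
      simpa [Bool.not_eq_true] using this
    have hcastc : ((univ.filter (fun j => h (xt j) = true)).card : ℝ)
        = (Nt : ℝ) - ((univ.filter (fun j => h (xt j) = false)).card : ℝ) := by
      have := congrArg (Nat.cast : ℕ → ℝ) hcard
      push_cast at this; linarith
    have hfe : (fun j => (!h (xt j)) = false) = fun j => h (xt j) = true := by
      funext j; simp
    rw [hPt]
    simp only [hfe]
    rw [hcastc]; field_simp
  -- bounds
  have boundS : ∀ h : X → Bool, 0 ≤ Ps h ∧ Ps h ≤ 1 := by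
    intro h
    simp only [hPs]
    refine ⟨by positivity, ?_⟩
    have hle : ((univ.filter (fun i => h (xs i) = false)).card : ℝ) ≤ Ns := by
      exact_mod_cast (Finset.card_filter_le _ _).trans (by simp)
    rw [div_mul_eq_mul_div, one_mul, div_le_one hNs']
    exact hle
  have boundT : ∀ h : X → Bool, 0 ≤ Pt h ∧ Pt h ≤ 1 := by
    intro h
    simp only [hPt]
    refine ⟨by positivity, ?_⟩
    have hle : ((univ.filter (fun j => h (xt j) = false)).card : ℝ) ≤ Nt := by
      exact_mod_cast (Finset.card_filter_le _ _).trans (by simp)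
    rw [div_mul_eq_mul_div, one_mul, div_le_one hNt']
    exact hle
  set A : Set ℝ := {v | ∃ h ∈ H, v = |Ps h - Pt h|} with hA
  set B : Set ℝ := {v | ∃ h ∈ H, v = Ps h - Pt h} with hB
  have hBne : B.Nonempty := ⟨Ps h₀ - Pt h₀, h₀, hh₀, rfl⟩
  have hAne : A.Nonempty := ⟨|Ps h₀ - Pt h₀|, h₀, hh₀, rfl⟩
  have hBbdd : BddAbove B := by
    refine ⟨1, ?_⟩
    rintro v ⟨h, hh, rfl⟩
    have := (boundS h).2; have := (boundT h).1; linarith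
  have hAbdd : BddAbove A := by
    refine ⟨1, ?_⟩
    rintro v ⟨h, hh, rfl⟩
    have h1 := (boundS h).1; have h2 := (boundS h).2
    have h3 := (boundT h).1; have h4 := (boundT h).2
    rw [abs_le]; constructor <;> linarith
  -- A-elements are in B via symmetry
  have hAsubB : A ⊆ B := by
    rintro v ⟨h, hh, rfl⟩
    rcases abs_cases (Ps h - Pt h) with ⟨he, _⟩ | ⟨he, _⟩
    · exact ⟨h, hh, he⟩
    · refine ⟨fun x => !(h x), hsym h hh, ?_⟩
      rw [compS h, compT h, he]; ring
  have hsupAB : sSup A = sSup B := by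
    apply le_antisymm
    · exact csSup_le_csSup hBbdd hAne hAsubB
    · apply csSup_le hBne
      rintro v ⟨h, hh, rfl⟩
      calc Ps h - Pt h ≤ |Ps h - Pt h| := le_abs_self _
        _ ≤ sSup A := le_csSup hAbdd ⟨h, hh, rfl⟩
  -- the inf set equals the image of B under (1 - ·)
  have hC : {v : ℝ | ∃ h ∈ H, v =
          (1 / (Ns : ℝ)) * ((univ.filter (fun i => h (xs i) = true)).card : ℝ)
            + (1 / (Nt : ℝ)) * ((univ.filter (fun j => h (xt j) = false)).card : ℝ)}
      = (fun v => 1 - v) '' B := by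
    ext v
    constructor
    · rintro ⟨h, hh, rfl⟩
      refine ⟨Ps h - Pt h, ⟨h, hh, rfl⟩, ?_⟩
      simp only [keyS h, hPt]; ring
    · rintro ⟨w, ⟨h, hh, rfl⟩, rfl⟩
      refine ⟨h, hh, ?_⟩
      simp only [keyS h, hPt]; ring
  have hinf : sInf ((fun v => (1:ℝ) - v) '' B) = 1 - sSup B := by
    have hc : ContinuousAt (fun v : ℝ => 1 - v) (sSup B) := by fun_prop
    have ha : Antitone (fun v : ℝ => 1 - v) := fun a b hab => by simp only; linarith
    exact (Antitone.map_csSup_of_continuousAt hc ha hBne hBbdd).symm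
  rw [hC, hinf, hsupAB]
  ring
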